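/- Let D be a dominion of player α in a parity game with winning strategy σ. Then for every priority p in the set { max{pr(v) : v ∈ inf(π)} : π ∈ Plays(D, σ) } of winning priorities, there is a p-tangle (U, σ restricted to U) with U ⊆ D. -/

import Mathlib

open scoped Classical

/-- A parity game on a finite vertex type `V`.  Player `false` is Even and
player `true` is Odd; `owner v` is the player controlling vertex `v`,
`edge` is the (left-total) move relation and `pr` assigns priorities. -/
structure ParityGame (V : Type) [Fintype V] where
  owner : V → Bool
  edge : V → V → Prop
  total : ∀ v, ∃ w, edge v w
  pr : V → ℕ

namespace ParityGame

variable {V : Type} [Fintype V] (G : ParityGame V)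

/-- The player whose parity matches the priority `p` (`false` = Even, `true` = Odd). -/
def playerOf (p : ℕ) : Bool := decide (p % 2 = 1)

/-- A play is an infinite sequence of vertices consistent with the edge relation. -/
def IsPlay (π : ℕ → V) : Prop := ∀ i, G.edge (π i) (π (i + 1))

/-- The set of vertices occurring infinitely often in `π`. -/
def infOcc (π : ℕ → V) : Set V := {v | ∀ n : ℕ, ∃ m, n ≤ m ∧ π m = v}

/-- The highest priority of a vertex in `S`. -/
noncomputable def maxPr (S : Set V) : ℕ := sSup (G.pr '' S)

/-- Player `α` wins the play `π` iff the highest priority occurring infinitely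
often in `π` has `α`'s parity. -/
def Wins (α : Bool) (π : ℕ → V) : Prop := playerOf (G.maxPr (infOcc π)) = α

/-- A (positional, partial) strategy for player `α`. -/
def IsStrategy (α : Bool) (σ : V → Option V) : Prop :=
  ∀ v w, σ v = some w → G.owner v = α ∧ G.edge v w

/-- A play is consistent with the strategy `σ`. -/
def Consistent (σ : V → Option V) (π : ℕ → V) : Prop :=
  ∀ i w, σ (π i) = some w → π (i + 1) = w

/-- All plays starting in `U` that are consistent with `σ`. -/
def PlaysFrom (U : Set V) (σ : V → Option V) : Set (ℕ → V) :=
  {π | G.IsPlay π ∧ π 0 ∈ U ∧ Consistent σ π}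

/-- `U` is closed with respect to player `α`: every `α`-vertex of `U` has a
successor in `U` and every opponent vertex of `U` has all successors in `U`. -/
def ClosedFor (α : Bool) (U : Set V) : Prop :=
  (∀ v ∈ U, G.owner v = α → ∃ w ∈ U, G.edge v w) ∧
  (∀ v ∈ U, G.owner v ≠ α → ∀ w, G.edge v w → w ∈ U)

/-- `D` is an `α`-dominion with (winning) strategy `σ`: `D` is closed for `α`,
`σ` is a strategy of `α` defined on all `α`-vertices of `D` with values in `D`,
and `α` wins every consistent play from `D`. -/
def IsDominionWith (α : Bool) (D : Set V) (σ : V → Option V) : Prop :=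
  G.ClosedFor α D ∧ G.IsStrategy α σ ∧
  (∀ v ∈ D, G.owner v = α → ∃ w ∈ D, σ v = some w) ∧
  ∀ π ∈ G.PlaysFrom D σ, G.Wins α π

/-- `D` is an `α`-dominion. -/
def IsDominion (α : Bool) (D : Set V) : Prop := ∃ σ, G.IsDominionWith α D σ

/-- The value of a play: the highest priority occurring infinitely often. -/
noncomputable def playValue (π : ℕ → V) : ℕ := G.maxPr (infOcc π)

/-- `D` is a `p`-dominion with winning strategy `σ`: a dominion such that `p` is
the maximum, over all consistent plays from `D`, of the highest priority seen
infinitely often. -/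
def IsPDominionWith (α : Bool) (p : ℕ) (D : Set V) (σ : V → Option V) : Prop :=
  G.IsDominionWith α D σ ∧ IsGreatest (G.playValue '' G.PlaysFrom D σ) p

/-- `D` is a `p`-dominion for player `α`. -/
def IsPDominion (α : Bool) (p : ℕ) (D : Set V) : Prop := ∃ σ, G.IsPDominionWith α p D σ

/-- The edges of the subgame `G[U,σ]` induced by `U` and the strategy `σ`. -/
def subEdge (U : Set V) (σ : V → Option V) (u v : V) : Prop :=
  u ∈ U ∧ v ∈ U ∧ G.edge u v ∧ (σ u = none ∨ σ u = some v)

/-- `G[U,σ]` is strongly connected. -/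
def StronglyConnected (U : Set V) (σ : V → Option V) : Prop :=
  ∀ u ∈ U, ∀ v ∈ U, Relation.ReflTransGen (G.subEdge U σ) u v

/-- A cycle of `G[U,σ]`: from `v` through the list `l` back to `v`. -/
def IsCycle (U : Set V) (σ : V → Option V) (v : V) (l : List V) : Prop :=
  List.Chain (G.subEdge U σ) v (l ++ [v])

/-- Player `α` wins all cycles of `G[U,σ]`: the maximum priority on every cycle
has `α`'s parity. -/
def WinsAllCycles (α : Bool) (U : Set V) (σ : V → Option V) : Prop :=
  ∀ v l, G.IsCycle U σ v l → playerOf (G.maxPr {x | x ∈ v :: l}) = α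

/-- `(U, σ)` is a tangle: `U` is nonempty, `σ` is a strategy for the player `α`
of the parity of the highest priority of `U`, defined exactly on the
`α`-vertices of `U` with values in `U`, the subgame `G[U,σ]` is strongly
connected, and player `α` wins all cycles of `G[U,σ]`. -/
def IsTangle (U : Set V) (σ : V → Option V) : Prop :=
  U.Nonempty ∧
  (∀ v w, σ v = some w → v ∈ U ∧ w ∈ U ∧ G.owner v = playerOf (G.maxPr U) ∧ G.edge v w) ∧
  (∀ v ∈ U, G.owner v = playerOf (G.maxPr U) → (σ v).isSome) ∧
  G.StronglyConnected U σ ∧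
  G.WinsAllCycles (playerOf (G.maxPr U)) U σ

/-- The escapes `E_T(T)` of a tangle with vertex set `U`: the successors outside
`U` of the opponent's vertices in `U`. -/
def escapes (U : Set V) : Set V :=
  {v | v ∉ U ∧ ∃ u ∈ U, G.owner u ≠ playerOf (G.maxPr U) ∧ G.edge u v}

/-- The restriction of a strategy to a set `U`. -/
noncomputable def restrict (σ : V → Option V) (U : Set V) : V → Option V :=
  fun v => if v ∈ U then σ v else none

/-- The attractor of `A` for player `α`: the least fixpoint of
`Z := A ∪ {v ∈ V_α | E(v) ∩ Z ≠ ∅} ∪ {v ∈ V_ᾱ | E(v) ⊆ Z}`. -/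
inductive Attr (α : Bool) (A : Set V) : V → Prop
  | base : ∀ v, v ∈ A → Attr α A v
  | step : ∀ v w, G.owner v = α → G.edge v w → Attr α A w → Attr α A v
  | forced : ∀ v, G.owner v ≠ α → (∀ w, G.edge v w → Attr α A w) → Attr α A v

/-- The attractor of `A` for player `α`, as a set. -/
def attrSet (α : Bool) (A : Set V) : Set V := {v | G.Attr α A v}

/-- The tangle attractor of `A` for player `α` with tangle set `TT`: the least
fixpoint additionally attracting all vertices of `α`-tangles of `TT` whose
escapes all lie in the attracting set. -/
inductive TAttr (α : Bool) (TT : Set (Set V × (V → Option V))) (A : Set V) : V → Prop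
  | base : ∀ v, v ∈ A → TAttr α TT A v
  | step : ∀ v w, G.owner v = α → G.edge v w → TAttr α TT A w → TAttr α TT A v
  | forced : ∀ v, G.owner v ≠ α → (∀ w, G.edge v w → TAttr α TT A w) → TAttr α TT A v
  | tangle : ∀ (U : Set V) (τ : V → Option V) (v : V), (U, τ) ∈ TT →
      G.IsTangle U τ → playerOf (G.maxPr U) = α →
      (∀ w ∈ G.escapes U, TAttr α TT A w) → v ∈ U → TAttr α TT A v

/-- The tangle attractor of `A` for player `α`, as a set. -/
def tattrSet (α : Bool) (TT : Set (Set V × (V → Option V))) (A : Set V) : Set V :=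
  {v | G.TAttr α TT A v}

end ParityGame

/-! The tangle is the set `U` of vertices occurring infinitely often in a play of value `p`,
with `σ` restricted to `U`. The tail of the play runs inside `G[U, σ|U]` and visits every vertex
of `U` again and again, so this subgame is strongly connected; and any cycle of it, traversed
forever, is a play from `D` consistent with `σ`, hence won by `α`. -/

theorem List.IsChain.rel_getElem_mod_succ {α : Type*} {R : α → α → Prop} {v : α} {l : List α}
    (h : List.IsChain R (v :: l ++ [v])) (i : ℕ) :
    R ((v :: l)[i % (l.length + 1)]'(Nat.mod_lt _ l.length.succ_pos))
      ((v :: l)[(i + 1) % (l.length + 1)]'(Nat.mod_lt _ l.length.succ_pos)) := by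
  have hj : i % (l.length + 1) < l.length + 1 := Nat.mod_lt _ l.length.succ_pos
  have hstep := List.isChain_iff_getElem.mp h (i % (l.length + 1)) (by simp; omega)
  rw [List.getElem_append_left (by simpa using hj)] at hstep
  convert hstep using 1
  have hmod : (i + 1) % (l.length + 1) = (i % (l.length + 1) + 1) % (l.length + 1) :=
    (Nat.mod_add_mod i _ 1).symm
  simp only [hmod]
  rcases (Nat.succ_le_of_lt hj).lt_or_eq with hlt | heq
  · simp only [Nat.mod_eq_of_lt hlt]
    exact (List.getElem_append_left (by simpa using hlt)).symm
  · simp only [Nat.succ_eq_add_one] at heq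
    simp [heq]

namespace ParityGame

open Filter

section Plays

variable {V : Type}

theorem mem_infOcc_iff_frequently {π : ℕ → V} {v : V} :
    v ∈ infOcc π ↔ ∃ᶠ m in atTop, π m = v :=
  frequently_atTop.symm

theorem infOcc_subset_range (π : ℕ → V) : infOcc π ⊆ Set.range π :=
  fun _ hv => (mem_infOcc_iff_frequently.mp hv).exists

theorem eventually_mem_infOcc [Finite V] (π : ℕ → V) : ∀ᶠ m in atTop, π m ∈ infOcc π := by
  have hfin : ∀ v, v ∉ infOcc π → ∀ᶠ m in atTop, π m ≠ v := fun v hv =>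
    not_frequently.mp (mt mem_infOcc_iff_frequently.mpr hv)
  filter_upwards [eventually_all.mpr fun v => eventually_imp_distrib_left.mpr (hfin v)] with m hm
  by_contra hout
  exact hm (π m) hout rfl

theorem infOcc_eq_range_of_periodic {f : ℕ → V} {n : ℕ} (hf : Function.Periodic f n)
    (hn : 0 < n) : infOcc f = Set.range f := by
  refine (infOcc_subset_range f).antisymm ?_
  rintro _ ⟨j, rfl⟩ N
  exact ⟨j + N * n, by nlinarith, hf.nat_mul N j⟩

theorem restrict_eq_some {σ : V → Option V} {U : Set V} {v w : V} :
    restrict σ U v = some w ↔ v ∈ U ∧ σ v = some w := by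
  unfold restrict
  split_ifs with hv <;> simp [hv]

theorem Consistent.mem_infOcc {σ : V → Option V} {π : ℕ → V} (hπ : Consistent σ π) {v w : V}
    (hv : v ∈ infOcc π) (hw : σ v = some w) : w ∈ infOcc π := fun N => by
  obtain ⟨m, hm, rfl⟩ := hv N
  exact ⟨m + 1, by omega, hπ m w hw⟩

theorem Consistent.of_restrict {σ : V → Option V} {U : Set V} {π : ℕ → V}
    (hπ : Consistent (restrict σ U) π) (hU : ∀ i, π i ∈ U) : Consistent σ π :=
  fun i w hw => hπ i w (restrict_eq_some.mpr ⟨hU i, hw⟩)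

end Plays

variable {V : Type} [Fintype V]

section Dominion

variable {G : ParityGame V} {α : Bool} {D U : Set V}
  {σ : V → Option V} {π : ℕ → V}

theorem IsCycle.exists_play {τ : V → Option V} {v : V} {l : List V} (h : G.IsCycle U τ v l) :
    ∃ π, G.IsPlay π ∧ Consistent τ π ∧ (∀ i, π i ∈ U) ∧ infOcc π = {x | x ∈ v :: l} := by
  set π : ℕ → V := fun i => (v :: l)[i % (l.length + 1)]'(Nat.mod_lt _ l.length.succ_pos)
  have hedge : ∀ i, G.subEdge U τ (π i) (π (i + 1)) := List.IsChain.rel_getElem_mod_succ h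
  have hperiodic : Function.Periodic π (l.length + 1) := fun i => by simp [π]
  refine ⟨π, fun i => (hedge i).2.2.1, fun i w hw => ?_, fun i => (hedge i).1, ?_⟩
  · rcases (hedge i).2.2.2 with hnone | hsome
    · simp [hnone] at hw
    · exact Option.some_injective _ (hsome.symm.trans hw)
  · rw [infOcc_eq_range_of_periodic hperiodic l.length.succ_pos]
    ext x
    refine ⟨?_, fun hx => ?_⟩
    · rintro ⟨i, rfl⟩
      exact List.getElem_mem _
    · obtain ⟨j, hj, rfl⟩ := List.mem_iff_getElem.mp hx
      exact ⟨j, by simp only [π, Nat.mod_eq_of_lt (show j < l.length + 1 from hj)]⟩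

theorem IsDominionWith.mem_of_mem_playsFrom (h : G.IsDominionWith α D σ)
    (hπ : π ∈ G.PlaysFrom D σ) (i : ℕ) : π i ∈ D := by
  obtain ⟨⟨-, hclosed⟩, -, hdef, -⟩ := h
  obtain ⟨hplay, hstart, hcons⟩ := hπ
  induction i with
  | zero => exact hstart
  | succ i ih =>
    by_cases hown : G.owner (π i) = α
    · obtain ⟨w, hwD, hw⟩ := hdef (π i) ih hown
      exact hcons i w hw ▸ hwD
    · exact hclosed (π i) ih hown _ (hplay i)

theorem IsDominionWith.infOcc_subset (h : G.IsDominionWith α D σ) (hπ : π ∈ G.PlaysFrom D σ) :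
    infOcc π ⊆ D :=
  (infOcc_subset_range π).trans (Set.range_subset_iff.mpr (h.mem_of_mem_playsFrom hπ))

theorem IsDominionWith.winsAllCycles (h : G.IsDominionWith α D σ) (hUD : U ⊆ D) :
    G.WinsAllCycles α U (restrict σ U) := by
  intro v l hcyc
  obtain ⟨π, hplay, hcons, hU, hinf⟩ := hcyc.exists_play
  rw [← hinf]
  exact h.2.2.2 π ⟨hplay, hUD (hU 0), hcons.of_restrict hU⟩

theorem stronglyConnected_infOcc (hplay : G.IsPlay π) (hcons : Consistent σ π) :
    G.StronglyConnected (infOcc π) (restrict σ (infOcc π)) := by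
  obtain ⟨N, hN⟩ := eventually_atTop.mp (eventually_mem_infOcc π)
  have hedge : ∀ m, N ≤ m →
      Relation.ReflTransGen (G.subEdge (infOcc π) (restrict σ (infOcc π))) (π m) (π (m + 1)) := by
    intro m hm
    refine .single ⟨hN m hm, hN (m + 1) (by omega), hplay m, ?_⟩
    rcases hσ : σ (π m) with _ | w
    · exact .inl (by simp [restrict, hσ])
    · exact .inr (by simp [restrict, hN m hm, hσ, hcons m w hσ])
  intro u hu v hv
  obtain ⟨m, hm, rfl⟩ := hu N
  obtain ⟨m', hm', rfl⟩ := hv m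
  exact Nat.rel_of_forall_rel_succ_of_le_of_le _ hedge hm hm'

theorem IsDominionWith.isTangle_infOcc (h : G.IsDominionWith α D σ) (hπ : π ∈ G.PlaysFrom D σ) :
    G.IsTangle (infOcc π) (restrict σ (infOcc π)) := by
  have hUD := h.infOcc_subset hπ
  have hcycles := h.winsAllCycles hUD
  obtain ⟨-, hstrat, hdef, hwin⟩ := h
  have hα : playerOf (G.maxPr (infOcc π)) = α := hwin π hπ
  refine ⟨(eventually_mem_infOcc π).exists.elim fun m hm => ⟨π m, hm⟩, ?_, ?_,
    stronglyConnected_infOcc hπ.1 hπ.2.2, hα ▸ hcycles⟩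
  · intro v w hvw
    obtain ⟨hv, hσv⟩ := restrict_eq_some.mp hvw
    obtain ⟨hown, hedge⟩ := hstrat v w hσv
    exact ⟨hv, hπ.2.2.mem_infOcc hv hσv, hα ▸ hown, hedge⟩
  · intro v hv hown
    obtain ⟨w, -, hw⟩ := hdef v (hUD hv) (hα ▸ hown)
    simp [restrict, hv, hw]

end Dominion

/-- for every winning priority `p` of a dominion `D` with winning
strategy `σ`, there is a `p`-tangle `(U, σ|U)` with `U ⊆ D`. -/
theorem dominion_tangle_hierarchy (G : ParityGame V) (α : Bool) (D : Set V)
    (σ : V → Option V) (h : G.IsDominionWith α D σ)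
    (p : ℕ) (hp : p ∈ G.playValue '' G.PlaysFrom D σ) :
    ∃ U : Set V, U ⊆ D ∧ G.IsTangle U (restrict σ U) ∧ G.maxPr U = p := by
  obtain ⟨π, hπ, rfl⟩ := hp
  exact ⟨infOcc π, h.infOcc_subset hπ, h.isTangle_infOcc hπ, rfl⟩

end ParityGame
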